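/- Let n ≥ 3 be an integer, let h satisfy hypotheses (H), let k ≥ 1 be an integer, and suppose there exist C2 > C1 > 0 and 0 < R1 < R such that h(r) ≤ C2 for all 0 ≤ r ≤ R and h(r) ≥ C1 for all 0 ≤ r ≤ R1. Then σ_(k)(g_h) ≤ (C2^{n−3}/C1^{n−1}) · (R λ_(k) + C2²/(R − R1)). -/

import Mathlib

open MeasureTheory Set

/-- Hypotheses (H): `h` is smooth on `[0,R]`, positive on `[0,R)`, `h(R)=0`,
`h'(R) = -1`, and all even-order derivatives of `h` vanish at `R`. -/
def SatisfiesH (R : ℝ) (h : ℝ → ℝ) : Prop :=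
  ContDiffOn ℝ (⊤ : ℕ∞) h (Set.Icc 0 R) ∧
  (∀ r ∈ Set.Ico (0:ℝ) R, 0 < h r) ∧
  h R = 0 ∧
  derivWithin h (Set.Icc 0 R) R = -1 ∧
  ∀ k : ℕ, iteratedDerivWithin (2 * k) h (Set.Icc 0 R) R = 0

/-- The `k`-th distinct eigenvalue `λ_(k) = k (n + k - 2)` of the Laplacian on the
round unit sphere `S^{n-1}`. -/
noncomputable def sphereEig (n k : ℕ) : ℝ := (k : ℝ) * ((n : ℝ) + (k : ℝ) - 2)

/-- The Rayleigh quotient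
`R_λ(a; h) = (∫₀^R ((a')² h^{n-1} + λ a² h^{n-3}))/(a(0)² h(0)^{n-1})`. -/
noncomputable def rayleighQ (R : ℝ) (n : ℕ) (lam : ℝ) (h a : ℝ → ℝ) : ℝ :=
  (∫ r in (0:ℝ)..R,
      (deriv a r) ^ 2 * h r ^ ((n : ℤ) - 1) + lam * (a r) ^ 2 * h r ^ ((n : ℤ) - 3)) /
    ((a 0) ^ 2 * h 0 ^ ((n : ℤ) - 1))

/-- Admissible test functions: Lipschitz on `[0,R]`, vanishing at `R`, nonzero at `0`. -/
def IsAdmissible (R : ℝ) (a : ℝ → ℝ) : Prop :=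
  (∃ K : NNReal, LipschitzOnWith K a (Set.Icc 0 R)) ∧ a R = 0 ∧ a 0 ≠ 0

/-- The `k`-th distinct Steklov eigenvalue of the ball `[0,R] × S^{n-1}` with the
revolution metric `g_h`, characterized variationally. -/
noncomputable def steklov (R : ℝ) (n k : ℕ) (h : ℝ → ℝ) : ℝ :=
  sInf { v : ℝ | ∃ a : ℝ → ℝ, IsAdmissible R a ∧ v = rayleighQ R n (sphereEig n k) h a }

/-- `a` is a minimizer realizing `σ_(k)(g_h)`. -/
def IsMinimizer (R : ℝ) (n k : ℕ) (h a : ℝ → ℝ) : Prop :=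
  IsAdmissible R a ∧ rayleighQ R n (sphereEig n k) h a = steklov R n k h

/-!
Test the variational characterization with the cutoff `a(r) = min 1 ((R - r)/(R - R₁))`,
equal to `1` on `[0, R₁]` and decreasing linearly to `0` on `[R₁, R]`. On `[0, R₁]` only the
`λ`-term of the integrand survives and it is at most `λ C₂^{n-3}`; on `[R₁, R]` the derivative
term adds at most `C₂^{n-1}/(R - R₁)²`. The denominator is `h(0)^{n-1} ≥ C₁^{n-1}`.
-/

lemma sphereEig_nonneg {n : ℕ} (hn : 2 ≤ n) (k : ℕ) : 0 ≤ sphereEig n k := by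
  have hn' : (2 : ℝ) ≤ n := by exact_mod_cast hn
  have hk : (0 : ℝ) ≤ k := k.cast_nonneg
  exact mul_nonneg hk (by linarith)

lemma SatisfiesH.nonneg {R : ℝ} {h : ℝ → ℝ} (hH : SatisfiesH R h) :
    ∀ r ∈ Icc 0 R, 0 ≤ h r := by
  rintro r ⟨h0r, hrR⟩
  rcases hrR.lt_or_eq with hlt | rfl
  · exact (hH.2.1 r ⟨h0r, hlt⟩).le
  · exact hH.2.2.1.ge

lemma rayleighQ_nonneg {R lam : ℝ} {n : ℕ} {h : ℝ → ℝ} (a : ℝ → ℝ) (hR : 0 ≤ R)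
    (hlam : 0 ≤ lam) (hh : ∀ r ∈ Icc 0 R, 0 ≤ h r) : 0 ≤ rayleighQ R n lam h a := by
  have h0 : 0 ≤ h 0 := hh 0 ⟨le_rfl, hR⟩
  refine div_nonneg (intervalIntegral.integral_nonneg hR fun r hr => ?_) (by positivity)
  have := hh r hr
  positivity

lemma steklov_le_rayleighQ {R : ℝ} {n k : ℕ} {h a : ℝ → ℝ} (hR : 0 ≤ R) (hn : 2 ≤ n)
    (hh : ∀ r ∈ Icc 0 R, 0 ≤ h r) (ha : IsAdmissible R a) :
    steklov R n k h ≤ rayleighQ R n (sphereEig n k) h a :=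
  csInf_le ⟨0, by rintro _ ⟨b, -, rfl⟩; exact rayleighQ_nonneg b hR (sphereEig_nonneg hn k) hh⟩
    ⟨a, ha, rfl⟩

lemma rayleighQ_eq_pow {R lam : ℝ} {n : ℕ} (hn : 3 ≤ n) (h a : ℝ → ℝ) :
    rayleighQ R n lam h a =
      (∫ r in (0 : ℝ)..R, deriv a r ^ 2 * h r ^ (n - 1) + lam * a r ^ 2 * h r ^ (n - 3)) /
        (a 0 ^ 2 * h 0 ^ (n - 1)) := by
  have e1 : (n : ℤ) - 1 = ((n - 1 : ℕ) : ℤ) := by omega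
  have e3 : (n : ℤ) - 3 = ((n - 3 : ℕ) : ℤ) := by omega
  simp only [rayleighQ, e1, e3, zpow_natCast]

lemma integral_le_of_le_on_adjacent_Ioo {f : ℝ → ℝ} {a b c A B : ℝ} (hab : a ≤ b) (hbc : b ≤ c)
    (hf : IntervalIntegrable f volume a c) (hA : ∀ x ∈ Ioo a b, f x ≤ A)
    (hB : ∀ x ∈ Ioo b c, f x ≤ B) :
    ∫ x in a..c, f x ≤ A * (b - a) + B * (c - b) := by
  have hac : uIcc a c = Icc a c := uIcc_of_le (hab.trans hbc)
  have hfab : IntervalIntegrable f volume a b :=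
    hf.mono_set (by rw [hac, uIcc_of_le hab]; exact Icc_subset_Icc_right hbc)
  have hfbc : IntervalIntegrable f volume b c :=
    hf.mono_set (by rw [hac, uIcc_of_le hbc]; exact Icc_subset_Icc_left hab)
  have h₁ := intervalIntegral.integral_mono_on_of_le_Ioo hab hfab intervalIntegrable_const hA
  have h₂ := intervalIntegral.integral_mono_on_of_le_Ioo hbc hfbc intervalIntegrable_const hB
  rw [intervalIntegral.integral_const, smul_eq_mul] at h₁ h₂
  rw [← intervalIntegral.integral_add_adjacent_intervals hfab hfbc]
  linarith

noncomputable def cutoff (R₁ R r : ℝ) : ℝ := min 1 ((R - r) / (R - R₁))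

section cutoff

variable {R₁ R : ℝ}

lemma cutoff_self : cutoff R₁ R R = 0 := by simp [cutoff]

lemma cutoff_of_le (hR : R₁ < R) {r : ℝ} (hr : r ≤ R₁) : cutoff R₁ R r = 1 :=
  min_eq_left <| (one_le_div (sub_pos.2 hR)).2 (by linarith)

lemma sq_cutoff_le_one (hR : R₁ < R) {r : ℝ} (hr : r ≤ R) : cutoff R₁ R r ^ 2 ≤ 1 := by
  have h0 : 0 ≤ cutoff R₁ R r := le_min zero_le_one (div_nonneg (by linarith) (by linarith))
  have h1 : cutoff R₁ R r ≤ 1 := min_le_left _ _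
  nlinarith

lemma lipschitzWith_cutoff (R₁ R : ℝ) : LipschitzWith ‖(R - R₁)⁻¹‖₊ (cutoff R₁ R) := by
  have : LipschitzWith ‖(R - R₁)⁻¹‖₊ fun r => (R - r) / (R - R₁) := by
    refine LipschitzWith.of_dist_le_mul fun x y => le_of_eq ?_
    rw [coe_nnnorm, Real.norm_eq_abs, Real.dist_eq, Real.dist_eq, ← abs_mul, abs_sub_comm]
    congr 1
    ring
  exact this.const_min 1

lemma sq_deriv_cutoff_le (r : ℝ) : deriv (cutoff R₁ R) r ^ 2 ≤ (R - R₁)⁻¹ ^ 2 := by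
  have := norm_deriv_le_of_lipschitz (x₀ := r) (lipschitzWith_cutoff R₁ R)
  rw [coe_nnnorm, Real.norm_eq_abs, Real.norm_eq_abs] at this
  exact sq_le_sq.2 this

lemma deriv_cutoff_of_lt (hR : R₁ < R) {r : ℝ} (hr : r < R₁) : deriv (cutoff R₁ R) r = 0 := by
  have : cutoff R₁ R =ᶠ[nhds r] fun _ => 1 :=
    Filter.eventually_of_mem (Iio_mem_nhds hr) fun s hs => cutoff_of_le hR (le_of_lt hs)
  rw [this.deriv_eq, deriv_const]

lemma isAdmissible_cutoff (h0 : 0 ≤ R₁) (hR : R₁ < R) : IsAdmissible R (cutoff R₁ R) :=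
  ⟨⟨_, (lipschitzWith_cutoff R₁ R).lipschitzOnWith⟩, cutoff_self,
    by rw [cutoff_of_le hR h0]; exact one_ne_zero⟩

lemma intervalIntegrable_sq_deriv_cutoff (a b : ℝ) :
    IntervalIntegrable (fun r => deriv (cutoff R₁ R) r ^ 2) volume a b := by
  refine (intervalIntegrable_const (c := (R - R₁)⁻¹ ^ 2)).mono_fun'
    ((measurable_deriv _).pow_const 2).aestronglyMeasurable
    (Filter.Eventually.of_forall fun r => ?_)
  simpa only [norm_pow, Real.norm_eq_abs, sq_abs] using sq_deriv_cutoff_le r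

end cutoff

lemma integral_cutoff_le {R₁ R C₂ lam : ℝ} {h : ℝ → ℝ} (p q : ℕ) (hR₁ : 0 ≤ R₁) (hR : R₁ < R)
    (hlam : 0 ≤ lam) (hcont : ContinuousOn h (Icc 0 R)) (h0 : ∀ r ∈ Icc 0 R, 0 ≤ h r)
    (hub : ∀ r ∈ Icc 0 R, h r ≤ C₂) :
    ∫ r in (0 : ℝ)..R, deriv (cutoff R₁ R) r ^ 2 * h r ^ p + lam * cutoff R₁ R r ^ 2 * h r ^ q ≤
      lam * C₂ ^ q * R + C₂ ^ p / (R - R₁) := by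
  have hd : 0 < R - R₁ := sub_pos.2 hR
  have hIcc : uIcc 0 R = Icc 0 R := uIcc_of_le (hR₁.trans hR.le)
  have hint : IntervalIntegrable
      (fun r => deriv (cutoff R₁ R) r ^ 2 * h r ^ p + lam * cutoff R₁ R r ^ 2 * h r ^ q)
      volume 0 R := by
    refine ((intervalIntegrable_sq_deriv_cutoff 0 R).mul_continuousOn ?_).add
      (ContinuousOn.intervalIntegrable ?_)
    · exact hIcc ▸ hcont.pow p
    · rw [hIcc]
      exact (continuous_const.mul
        (((lipschitzWith_cutoff R₁ R).continuous).pow 2)).continuousOn.mul (hcont.pow q)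
  have hlow : ∀ r ∈ Icc 0 R, lam * cutoff R₁ R r ^ 2 * h r ^ q ≤ lam * C₂ ^ q := fun r hr => by
    have := h0 r hr
    calc lam * cutoff R₁ R r ^ 2 * h r ^ q ≤ lam * 1 * C₂ ^ q := by
          gcongr
          exacts [sq_cutoff_le_one hR hr.2, hub r hr]
      _ = lam * C₂ ^ q := by ring
  have hflat : ∀ r ∈ Ioo 0 R₁,
      deriv (cutoff R₁ R) r ^ 2 * h r ^ p + lam * cutoff R₁ R r ^ 2 * h r ^ q ≤ lam * C₂ ^ q :=
    fun r hr => by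
      rw [deriv_cutoff_of_lt hR hr.2]
      simpa using hlow r ⟨hr.1.le, hr.2.le.trans hR.le⟩
  have hslope : ∀ r ∈ Ioo R₁ R,
      deriv (cutoff R₁ R) r ^ 2 * h r ^ p + lam * cutoff R₁ R r ^ 2 * h r ^ q ≤
        (R - R₁)⁻¹ ^ 2 * C₂ ^ p + lam * C₂ ^ q := fun r hr => by
    have hr' : r ∈ Icc 0 R := ⟨hR₁.trans hr.1.le, hr.2.le⟩
    have := h0 r hr'
    exact add_le_add (mul_le_mul (sq_deriv_cutoff_le r) (pow_le_pow_left₀ this (hub r hr') p)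
      (by positivity) (by positivity)) (hlow r hr')
  calc _ ≤ lam * C₂ ^ q * (R₁ - 0) + ((R - R₁)⁻¹ ^ 2 * C₂ ^ p + lam * C₂ ^ q) * (R - R₁) :=
        integral_le_of_le_on_adjacent_Ioo hR₁ hR.le hint hflat hslope
    _ = lam * C₂ ^ q * R + C₂ ^ p / (R - R₁) := by
        field_simp
        ring

theorem stmt_14_general (n : ℕ) (hn : 3 ≤ n) (R : ℝ) (h : ℝ → ℝ)
    (hH : SatisfiesH R h) (k : ℕ)
    (C1 C2 R1 : ℝ) (hC1 : 0 < C1) (hR1 : 0 < R1) (hR1R : R1 < R)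
    (hub : ∀ r ∈ Set.Icc (0:ℝ) R, h r ≤ C2)
    (hlb : ∀ r ∈ Set.Icc (0:ℝ) R1, C1 ≤ h r) :
    steklov R n k h ≤
      (C2 ^ (n - 3) / C1 ^ (n - 1)) * (R * sphereEig n k + C2 ^ 2 / (R - R1)) := by
  have hR : 0 < R := hR1.trans hR1R
  have hC1h : C1 ≤ h 0 := hlb 0 ⟨le_rfl, hR1.le⟩
  have hC2 : 0 < C2 := hC1.trans_le (hC1h.trans (hub 0 ⟨le_rfl, hR.le⟩))
  have hlam := sphereEig_nonneg (n := n) (by omega) k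
  calc steklov R n k h ≤ rayleighQ R n (sphereEig n k) h (cutoff R1 R) :=
        steklov_le_rayleighQ hR.le (by omega) hH.nonneg (isAdmissible_cutoff hR1.le hR1R)
    _ ≤ (sphereEig n k * C2 ^ (n - 3) * R + C2 ^ (n - 1) / (R - R1)) / C1 ^ (n - 1) := by
        rw [rayleighQ_eq_pow hn, cutoff_of_le hR1R hR1.le, one_pow, one_mul]
        have hd : 0 < R - R1 := sub_pos.2 hR1R
        exact div_le_div₀ (by positivity)
          (integral_cutoff_le _ _ hR1.le hR1R hlam hH.1.continuousOn hH.nonneg hub)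
          (by positivity) (pow_le_pow_left₀ hC1.le hC1h _)
    _ = _ := by
        rw [show C2 ^ (n - 1) = C2 ^ (n - 3) * C2 ^ 2 by rw [← pow_add]; congr 1; omega]
        field_simp

theorem stmt_14 (n : ℕ) (hn : 3 ≤ n) (R : ℝ) (hR : 0 < R) (h : ℝ → ℝ)
    (hH : SatisfiesH R h) (k : ℕ) (hk : 1 ≤ k)
    (C1 C2 R1 : ℝ) (hC1 : 0 < C1) (hC12 : C1 < C2) (hR1 : 0 < R1) (hR1R : R1 < R)
    (hub : ∀ r ∈ Set.Icc (0:ℝ) R, h r ≤ C2)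
    (hlb : ∀ r ∈ Set.Icc (0:ℝ) R1, C1 ≤ h r) :
    steklov R n k h ≤
      (C2 ^ (n - 3) / C1 ^ (n - 1)) * (R * sphereEig n k + C2 ^ 2 / (R - R1)) :=
  stmt_14_general n hn R h hH k C1 C2 R1 hC1 hR1 hR1R hub hlb
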